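/- arXiv:2401.15601 — 2 statements merged into one kernel-verified Lean document; each statement's English description precedes it below -/
import Mathlib

section
/- Fix 0 ≤ p ≤ K and l ∈ {1,…,n}; let c be the l-th column of C_p, assume c is nonzero and sign-coherent with common sign ε, and set c^+ := ε·c. Assume each h'_i := (e_i, d_l·c)_{D_0R} is an integer, and assume the duality (g_{i;p}, d_l·c)_{D_0R} = δ_{il} for all i (g_{i;p} the i-th column of G_p). Let ρ : F → F be a ring homomorphism fixing ℚ and every y_i and z_{i,s}, with ρ(x_i) = x_i for i ≠ l and ρ(x_l) = x_l·(∑_{s=0}^{r_l} z_{l,s}·Ŷ^{ε·s})^{-1}, where Ŷ := (∏_{m=1}^n y_m^{c_{ml;p}})·(∏_{m=1}^n x_m^{b_{ml;p}}); and let q : F → F be a ring homomorphism fixing ℚ and every y_i and z_{i,s}, with q(x_i) = x_i·(∑_{s=0}^{r_l} z_{l,s}·(ŷ^{c^+})^s)^{−h'_i} for all i. Then τ^{(p)} ∘ ρ = q ∘ τ^{(p)} as maps F → F. -/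
noncomputable section

/-- Variables of the ambient field of a generalized cluster algebra of rank `n` with
mutation degrees `r`: cluster variables `x_i`, coefficients `y_i`, and `z_{i,s}` for
`1 ≤ s ≤ r_i - 1` (encoded by `Fin (r i - 1)`, the variable `z i t` standing for
`z_{i, t+1}`). -/
inductive GVar (n : ℕ) (r : Fin n → ℕ) : Type where
  | x : Fin n → GVar n r
  | y : Fin n → GVar n r
  | z : (i : Fin n) → Fin (r i - 1) → GVar n r

/-- The ambient field: rational functions over `ℚ` in the variables `GVar n r`. -/
abbrev GF (n : ℕ) (r : Fin n → ℕ) : Type := FractionRing (MvPolynomial (GVar n r) ℚ)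

/-- The variable `x_i` as an element of the field `GF n r`. -/
def Xv {n : ℕ} {r : Fin n → ℕ} (i : Fin n) : GF n r :=
  algebraMap (MvPolynomial (GVar n r) ℚ) (GF n r) (MvPolynomial.X (GVar.x i))

/-- The variable `y_i` as an element of the field `GF n r`. -/
def Yv {n : ℕ} {r : Fin n → ℕ} (i : Fin n) : GF n r :=
  algebraMap (MvPolynomial (GVar n r) ℚ) (GF n r) (MvPolynomial.X (GVar.y i))

/-- The variable `z_{i,s+1}` (for `s : Fin (r i - 1)`) as an element of `GF n r`. -/
def Zv {n : ℕ} {r : Fin n → ℕ} (i : Fin n) (s : Fin (r i - 1)) : GF n r :=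
  algebraMap (MvPolynomial (GVar n r) ℚ) (GF n r) (MvPolynomial.X (GVar.z i s))

/-- A rational constant as an element of `GF n r`. -/
def Qc {n : ℕ} {r : Fin n → ℕ} (a : ℚ) : GF n r :=
  algebraMap (MvPolynomial (GVar n r) ℚ) (GF n r) (MvPolynomial.C a)

/-- `z_{i,s}` for `0 ≤ s ≤ r i`, with the convention `z_{i,0} = z_{i,r_i} = 1`. -/
def Zc {n : ℕ} (r : Fin n → ℕ) (i : Fin n) (s : ℕ) : GF n r :=
  if h : 0 < s ∧ s < r i then Zv i ⟨s - 1, by omega⟩ else 1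

/-- `x^v = ∏ x_i^{v_i}` for `v ∈ ℤ^n`. -/
def xpow {n : ℕ} (r : Fin n → ℕ) (v : Fin n → ℤ) : GF n r :=
  ∏ i, Xv (r := r) i ^ v i

/-- `ŷ_i = y_i·∏_j x_j^{b_{ji}}`. -/
def yhat {n : ℕ} (r : Fin n → ℕ) (B : Matrix (Fin n) (Fin n) ℤ) (i : Fin n) : GF n r :=
  Yv i * ∏ j, Xv (r := r) j ^ B j i

/-- `ŷ^v = ∏ ŷ_i^{v_i}` for `v ∈ ℤ^n`. -/
def yhatpow {n : ℕ} (r : Fin n → ℕ) (B : Matrix (Fin n) (Fin n) ℤ) (v : Fin n → ℤ) :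
    GF n r :=
  ∏ i, yhat r B i ^ v i

/-!
Along the mutation sequence, `τ^{(j)}` fixes `ℚ`, the `y`'s and the `z`'s and sends each
`x`-monomial `x^v` to `x^{G_j v}`, because mutating `G` is right multiplication by the
matrix through which `τ_j` acts on exponents. Sign-coherence of the `c`-vectors makes
`G_j B_j = B₀ C_j` invariant under mutation, so `τ^{(p)}` carries `Ŷ` to `ŷ^c` and hence the
denominator of `ρ` to the denominator `P` of `q`. Finally the duality `h'ᵀ G_p = e_lᵀ` says
that `q` multiplies `x^{g_{i;p}} = τ^{(p)}(x_i)` by exactly `P^{-δ_{il}}`, so both composites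
agree on the generators of the field.
-/

open Finset
open scoped Matrix

variable {n : ℕ}

def SkewSymmetrizedBy (d : Fin n → ℤ) (B : Matrix (Fin n) (Fin n) ℤ) : Prop :=
  ∀ a b, d a * B a b = -(d b * B b a)

-- In the three mutation rules below, `s` plays the role of `r_k`.
def mutB (s : ℤ) (k : Fin n) (B : Matrix (Fin n) (Fin n) ℤ) : Matrix (Fin n) (Fin n) ℤ :=
  Matrix.of fun a b => if a = k ∨ b = k then -(B a b)
    else B a b + s * (max (-(B a k)) 0 * B k b + B a k * max (B k b) 0)

def mutC (s : ℤ) (k : Fin n) (ε : ℤ) (B C : Matrix (Fin n) (Fin n) ℤ) :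
    Matrix (Fin n) (Fin n) ℤ :=
  Matrix.of fun a b => if b = k then -(C a b)
    else C a b + s * (C a k * max (ε * B k b) 0 + max (-(ε * C a k)) 0 * B k b)

def mutG (s : ℤ) (k : Fin n) (ε : ℤ) (B G : Matrix (Fin n) (Fin n) ℤ) :
    Matrix (Fin n) (Fin n) ℤ :=
  Matrix.of fun a i => if i = k then -(G a i) + s * ∑ m, max (-(ε * B m k)) 0 * G a m
    else G a i

lemma max_neg_add_self (x : ℤ) : max (-x) 0 + x = max x 0 := by
  rcases le_total x 0 with h | h <;> simp [h]

namespace SkewSymmetrizedBy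

variable {d : Fin n → ℤ} {B : Matrix (Fin n) (Fin n) ℤ}

lemma diag_eq_zero (h : SkewSymmetrizedBy d B) {k : Fin n} (hk : d k ≠ 0) : B k k = 0 := by
  have hkk : d k * B k k = 0 := by linarith [h k k]
  exact (mul_eq_zero.mp hkk).resolve_left hk

lemma mul_max_neg (h : SkewSymmetrizedBy d B) {a k : Fin n} (ha : 0 < d a) (hk : 0 < d k) :
    d a * max (-(B a k)) 0 = d k * max (B k a) 0 := by
  rw [mul_max_of_nonneg _ _ ha.le, mul_max_of_nonneg _ _ hk.le, mul_neg, h a k, neg_neg,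
    mul_zero, mul_zero]

lemma mutB (h : SkewSymmetrizedBy d B) (hd : ∀ i, 0 < d i) (s : ℤ) (k : Fin n) :
    SkewSymmetrizedBy d (mutB s k B) := by
  intro a b
  simp only [_root_.mutB, Matrix.of_apply, or_comm (a := b = k)]
  split_ifs
  · linear_combination -h a b
  · linear_combination h a b + s * B k b * h.mul_max_neg (hd a) (hd k)
      + s * B k a * h.mul_max_neg (hd b) (hd k) + s * max (B k b) 0 * h a k
      + s * max (B k a) 0 * h b k

end SkewSymmetrizedBy

lemma mutG_eq_mul (s : ℤ) (k : Fin n) (ε : ℤ) (B G : Matrix (Fin n) (Fin n) ℤ) :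
    mutG s k ε B G = G * mutG s k ε B 1 := by
  ext a i
  by_cases hi : i = k
  · simp [mutG, Matrix.mul_apply, hi, Matrix.one_apply, mul_sum, mul_add, mul_comm,
      mul_left_comm, sum_add_distrib]
  · simp [mutG, Matrix.mul_apply, hi, Matrix.one_apply]

lemma mutC_apply_of_signCoherent {s : ℤ} {k : Fin n} {ε : ℤ} {B C : Matrix (Fin n) (Fin n) ℤ}
    (hc : ∀ m, 0 ≤ ε * C m k) (a b : Fin n) (hb : b ≠ k) :
    mutC s k ε B C a b = C a b + s * (C a k * max (ε * B k b) 0) := by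
  simp [mutC, hb, max_eq_right (neg_nonpos.mpr (hc a))]

lemma mutG_mul_mutB_apply_of_ne {s : ℤ} {k : Fin n} {ε : ℤ} {B G : Matrix (Fin n) (Fin n) ℤ}
    (hBkk : B k k = 0) (a : Fin n) {b : Fin n} (hb : b ≠ k) :
    (mutG s k ε B G * mutB s k B) a b =
      (G * B) a b + s * (B k b * ∑ m, G a m * max (-(B m k)) 0 + max (B k b) 0 * (G * B) a k)
        - s * (∑ m, max (-(ε * B m k)) 0 * G a m) * B k b := by
  set Z := ∑ m, max (-(ε * B m k)) 0 * G a m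
  have hterm : ∀ m, mutG s k ε B G a m * mutB s k B m b =
      G a m * B m b + s * (B k b * (G a m * max (-(B m k)) 0) + max (B k b) 0 * (G a m * B m k))
        - if m = k then s * Z * B k b else 0 := fun m => by
    by_cases hm : m = k
    · subst hm
      simp only [mutG, mutB, Matrix.of_apply, ↓reduceIte, hb, or_false, mul_neg, hBkk, neg_zero,
        max_self, mul_zero, add_zero, Z]
      ring
    · simp only [mutG, mutB, Matrix.of_apply, hm, ↓reduceIte, hb, or_self, sub_zero]
      ring
  simp only [Matrix.mul_apply, hterm, sum_sub_distrib, sum_add_distrib, ← mul_sum, sum_ite_eq',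
    mem_univ, if_true, mul_add]

lemma mutG_mul_mutB {s : ℤ} {k : Fin n} {ε : ℤ} {B C G M : Matrix (Fin n) (Fin n) ℤ}
    (hBkk : B k k = 0) (hε : ε = 1 ∨ ε = -1) (hc : ∀ m, 0 ≤ ε * C m k)
    (h : G * B = M * C) :
    mutG s k ε B G * mutB s k B = M * mutC s k ε B C := by
  ext a b
  by_cases hb : b = k
  · subst hb
    have hterm : ∀ m, mutG s b ε B G a m * mutB s b B m b = -(G a m * B m b) := fun m => by
      by_cases hm : m = b
      · simp [hm, hBkk, mutB]
      · simp [mutG, mutB, hm]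
    have hab := congrFun (congrFun h a) b
    simp only [Matrix.mul_apply] at hab ⊢
    simp only [hterm, mutC, Matrix.of_apply, if_true, mul_neg, sum_neg_distrib, hab]
  have hC : (M * mutC s k ε B C) a b = (M * C) a b + s * max (ε * B k b) 0 * (M * C) a k := by
    simp only [Matrix.mul_apply, mutC_apply_of_signCoherent (s := s) (B := B) hc _ b hb, mul_add,
      sum_add_distrib, mul_sum]
    exact congrArg _ (sum_congr rfl fun _ _ => by ring)
  rw [mutG_mul_mutB_apply_of_ne hBkk a hb, hC, h]
  rcases hε with rfl | rfl
  · have hZ : ∑ m, max (-(1 * B m k)) 0 * G a m = ∑ m, G a m * max (-B m k) 0 :=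
      sum_congr rfl fun m _ => by rw [one_mul, mul_comm]
    rw [one_mul, hZ]
    ring
  · have hZ : ∑ m, max (-(-1 * B m k)) 0 * G a m =
        ∑ m, G a m * max (-B m k) 0 + (G * B) a k := by
      rw [Matrix.mul_apply, ← sum_add_distrib]
      exact sum_congr rfl fun m _ => by rw [neg_one_mul, neg_neg, ← max_neg_add_self]; ring
    rw [neg_one_mul, hZ, h]
    linear_combination -s * (M * C) a k * max_neg_add_self (B k b)

section MutationSequence

variable {K : ℕ} {s : ℕ → ℤ} {k : ℕ → Fin n} {ε : ℕ → ℤ} {d : Fin n → ℤ}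
  {B C G : ℕ → Matrix (Fin n) (Fin n) ℤ}

lemma skewSymmetrizedBy_of_mutB_seq (hd : ∀ i, 0 < d i) (h0 : SkewSymmetrizedBy d (B 0))
    (hB : ∀ j < K, B (j + 1) = mutB (s j) (k j) (B j)) :
    ∀ j ≤ K, SkewSymmetrizedBy d (B j)
  | 0, _ => h0
  | j + 1, hj => by
    rw [hB j hj]
    exact (skewSymmetrizedBy_of_mutB_seq hd h0 hB j (by omega)).mutB hd _ _

lemma mul_eq_mul_of_mutation_seq (hd : ∀ i, 0 < d i) (h0 : SkewSymmetrizedBy d (B 0))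
    (hB : ∀ j < K, B (j + 1) = mutB (s j) (k j) (B j))
    (hC : ∀ j < K, C (j + 1) = mutC (s j) (k j) (ε j) (B j) (C j))
    (hG : ∀ j < K, G (j + 1) = mutG (s j) (k j) (ε j) (B j) (G j))
    (hε : ∀ j < K, ε j = 1 ∨ ε j = -1) (hc : ∀ j < K, ∀ m, 0 ≤ ε j * C j m (k j))
    (hC0 : C 0 = 1) (hG0 : G 0 = 1) :
    ∀ j ≤ K, G j * B j = B 0 * C j
  | 0, _ => by rw [hC0, hG0, Matrix.one_mul, Matrix.mul_one]
  | j + 1, hj => by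
    have hskew := skewSymmetrizedBy_of_mutB_seq hd h0 hB j (by omega)
    rw [hB j hj, hC j hj, hG j hj]
    exact mutG_mul_mutB (hskew.diag_eq_zero (hd _).ne') (hε j hj) (hc j hj)
      (mul_eq_mul_of_mutation_seq hd h0 hB hC hG hε hc hC0 hG0 j (by omega))

end MutationSequence

lemma zpow_sum₀ {M ι : Type*} [CommGroupWithZero M] {x : M} (hx : x ≠ 0) (s : Finset ι)
    (f : ι → ℤ) : x ^ (∑ i ∈ s, f i) = ∏ i ∈ s, x ^ f i := by
  classical
  induction s using Finset.induction with
  | empty => simp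
  | insert a s h ih => rw [sum_insert h, prod_insert h, zpow_add₀ hx, ih]

lemma sum_mul_eq_ite_of_dual {d : Fin n → ℤ} {l : Fin n} (hl : d l ≠ 0) {h' c : Fin n → ℤ}
    {G : Matrix (Fin n) (Fin n) ℤ} (hh' : ∀ i, h' i * d l = d i * c i)
    (hdual : ∀ i, ∑ m, G m i * d m * c m = if i = l then d l else 0) (i : Fin n) :
    ∑ m, h' m * G m i = if i = l then 1 else 0 := by
  refine mul_right_cancel₀ hl ?_
  calc (∑ m, h' m * G m i) * d l = ∑ m, G m i * d m * c m := by
        rw [sum_mul]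
        exact sum_congr rfl fun m _ => by rw [mul_right_comm, hh']; ring
    _ = (if i = l then 1 else 0) * d l := by rw [hdual]; split_ifs <;> simp

section AmbientField

variable {r : Fin n → ℕ}

lemma Xv_ne_zero (i : Fin n) : (Xv i : GF n r) ≠ 0 :=
  (map_ne_zero_iff _ (IsFractionRing.injective _ _)).mpr (MvPolynomial.X_ne_zero _)

lemma xpow_add (v w : Fin n → ℤ) : xpow r (v + w) = xpow r v * xpow r w := by
  simp only [xpow, Pi.add_apply, zpow_add₀ (Xv_ne_zero _), prod_mul_distrib]

lemma xpow_neg (v : Fin n → ℤ) : xpow r (-v) = (xpow r v)⁻¹ := by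
  simp only [xpow, Pi.neg_apply, zpow_neg, prod_inv_distrib]

lemma xpow_smul (e : ℤ) (v : Fin n → ℤ) : xpow r (e • v) = xpow r v ^ e := by
  simp only [xpow, Pi.smul_apply, smul_eq_mul, mul_comm e, zpow_mul, prod_zpow]

lemma xpow_sum {ι : Type*} (s : Finset ι) (v : ι → Fin n → ℤ) :
    xpow r (∑ i ∈ s, v i) = ∏ i ∈ s, xpow r (v i) := by
  simp only [xpow, Finset.sum_apply, zpow_sum₀ (Xv_ne_zero _)]
  exact prod_comm

lemma xpow_single (i : Fin n) : xpow r (Pi.single i 1) = Xv i := by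
  simp [xpow, Pi.single_apply]

lemma xpow_mulVec (G : Matrix (Fin n) (Fin n) ℤ) (v : Fin n → ℤ) :
    xpow r (G *ᵥ v) = ∏ i, xpow r (fun m => G m i) ^ v i := by
  have hcols : G *ᵥ v = ∑ i, v i • fun m => G m i := by
    ext m
    simp [Matrix.mulVec, dotProduct, Finset.sum_apply, mul_comm]
  simp only [hcols, xpow_sum, xpow_smul]

lemma yhatpow_eq (B : Matrix (Fin n) (Fin n) ℤ) (v : Fin n → ℤ) :
    yhatpow r B v = (∏ m, Yv m ^ v m) * xpow r (B *ᵥ v) := by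
  simp only [yhatpow, yhat, xpow_mulVec, ← prod_mul_distrib, mul_zpow]
  rfl

lemma yhatpow_smul (B : Matrix (Fin n) (Fin n) ℤ) (e : ℤ) (v : Fin n → ℤ) :
    yhatpow r B (e • v) = yhatpow r B v ^ e := by
  simp only [yhatpow, Pi.smul_apply, smul_eq_mul, mul_comm e, zpow_mul, prod_zpow]

end AmbientField

section RingHoms

variable {r : Fin n → ℕ} {φ ψ : GF n r →+* GF n r}

def FixesCoefficients (φ : GF n r →+* GF n r) : Prop :=
  (∀ a : ℚ, φ (Qc a) = Qc a) ∧ (∀ i, φ (Yv i) = Yv i) ∧ ∀ i s, φ (Zv i s) = Zv i s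

def ActsOnXBy (φ : GF n r →+* GF n r) (G : Matrix (Fin n) (Fin n) ℤ) : Prop :=
  ∀ i, φ (Xv i) = xpow r (fun m => G m i)

lemma FixesCoefficients.comp (hφ : FixesCoefficients φ) (hψ : FixesCoefficients ψ) :
    FixesCoefficients (φ.comp ψ) :=
  ⟨fun a => by simp [hφ.1, hψ.1], fun i => by simp [hφ.2.1, hψ.2.1],
    fun i s => by simp [hφ.2.2, hψ.2.2]⟩

lemma FixesCoefficients.map_Zc (hφ : FixesCoefficients φ) (i : Fin n) (s : ℕ) :
    φ (Zc r i s) = Zc r i s := by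
  unfold Zc
  split
  · exact hφ.2.2 i _
  · exact map_one φ

lemma FixesCoefficients.ext (hφ : FixesCoefficients φ) (hψ : FixesCoefficients ψ)
    (hx : ∀ i, φ (Xv i) = ψ (Xv i)) : φ = ψ := by
  refine IsFractionRing.ringHom_ext (A := MvPolynomial (GVar n r) ℚ) fun f => ?_
  suffices φ.comp (algebraMap _ _) = ψ.comp (algebraMap _ _) from RingHom.congr_fun this f
  refine MvPolynomial.ringHom_ext (fun a => (hφ.1 a).trans (hψ.1 a).symm) ?_
  rintro (i | i | ⟨i, s⟩)
  · exact hx i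
  · exact (hφ.2.1 i).trans (hψ.2.1 i).symm
  · exact (hφ.2.2 i s).trans (hψ.2.2 i s).symm

lemma ActsOnXBy.map_xpow {G : Matrix (Fin n) (Fin n) ℤ} (h : ActsOnXBy φ G) (v : Fin n → ℤ) :
    φ (xpow r v) = xpow r (G *ᵥ v) := by
  rw [xpow_mulVec, xpow, map_prod]
  exact prod_congr rfl fun i _ => by rw [map_zpow₀, h i]

lemma actsOnXBy_id : ActsOnXBy (RingHom.id (GF n r)) 1 := fun i => by
  rw [RingHom.id_apply, ← xpow_single i]
  congr
  ext m
  simp [Matrix.one_apply, Pi.single_apply]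

lemma ActsOnXBy.comp {G M : Matrix (Fin n) (Fin n) ℤ} (hφ : ActsOnXBy φ G)
    (hψ : ActsOnXBy ψ M) :
    ActsOnXBy (φ.comp ψ) (G * M) := fun i => by
  rw [RingHom.comp_apply, hψ i, hφ.map_xpow]
  rfl

lemma actsOnXBy_mutG_one {s : ℤ} (hs : 0 ≤ s) {k : Fin n} {ε : ℤ}
    {B : Matrix (Fin n) (Fin n) ℤ}
    (hx : ∀ i, i ≠ k → φ (Xv i) = Xv i)
    (hxk : φ (Xv k) = (Xv k)⁻¹ * ∏ l, Xv l ^ max (-(ε * B l k * s)) 0) :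
    ActsOnXBy φ (mutG s k ε B 1) := fun i => by
  by_cases hi : i = k
  · subst hi
    have hcol : (fun m => mutG s i ε B 1 m i) =
        -Pi.single i 1 + fun m => max (-(ε * B m i * s)) 0 := by
      ext m
      simp only [mutG, Matrix.one_apply, mul_ite, mul_one, mul_zero, sum_ite_eq, mem_univ,
        ↓reduceIte, mul_max_of_nonneg _ _ hs, mul_neg, Matrix.of_apply, Pi.add_apply,
        Pi.neg_apply, Pi.single_apply, add_right_inj]
      ring_nf
    rw [hxk, hcol, xpow_add, xpow_neg, xpow_single]
    rfl
  · rw [hx i hi, ← xpow_single i]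
    congr
    ext m
    simp [mutG, hi, Matrix.one_apply, Pi.single_apply]

lemma fixesCoefficients_actsOnXBy_seq {K : ℕ} {T τ : ℕ → (GF n r →+* GF n r)}
    {G M : ℕ → Matrix (Fin n) (Fin n) ℤ} (hT0 : T 0 = RingHom.id _) (hG0 : G 0 = 1)
    (hT : ∀ j < K, T (j + 1) = (T j).comp (τ (j + 1))) (hG : ∀ j < K, G (j + 1) = G j * M j)
    (hτ : ∀ j < K, FixesCoefficients (τ (j + 1)) ∧ ActsOnXBy (τ (j + 1)) (M j)) :
    ∀ j ≤ K, FixesCoefficients (T j) ∧ ActsOnXBy (T j) (G j)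
  | 0, _ => by
    rw [hT0, hG0]
    exact ⟨⟨fun _ => rfl, fun _ => rfl, fun _ _ => rfl⟩, actsOnXBy_id⟩
  | j + 1, hj => by
    obtain ⟨hfix, hact⟩ := fixesCoefficients_actsOnXBy_seq hT0 hG0 hT hG hτ j (by omega)
    rw [hT j hj, hG j hj]
    exact ⟨hfix.comp (hτ j hj).1, hact.comp (hτ j hj).2⟩

end RingHoms

section Intertwining

variable {r : Fin n → ℕ} {T ρ q : GF n r →+* GF n r}

lemma map_xpow_of_map_Xv_eq_mul_zpow {P : GF n r} (hP : P ≠ 0) {h' : Fin n → ℤ}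
    (hq : ∀ i, q (Xv i) = Xv i * P ^ (-(h' i))) (v : Fin n → ℤ) :
    q (xpow r v) = xpow r v * P ^ (-(∑ i, h' i * v i)) := by
  simp only [xpow, map_prod, map_zpow₀, hq, mul_zpow, prod_mul_distrib, ← zpow_mul,
    ← zpow_sum₀ hP, ← sum_neg_distrib, neg_mul]

lemma comp_eq_comp_of_dual {G : Matrix (Fin n) (Fin n) ℤ} {l : Fin n} {h' : Fin n → ℤ}
    {S P : GF n r} (hT : FixesCoefficients T) (hTG : ActsOnXBy T G)
    (hρ : FixesCoefficients ρ) (hq : FixesCoefficients q)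
    (hρx : ∀ i, i ≠ l → ρ (Xv i) = Xv i) (hρl : ρ (Xv l) = Xv l * S⁻¹)
    (hqx : ∀ i, q (Xv i) = Xv i * P ^ (-(h' i))) (hTS : T S = P)
    (hdual : ∀ i, ∑ m, h' m * G m i = if i = l then 1 else 0) :
    T.comp ρ = q.comp T := by
  have hS : S ≠ 0 := by
    rintro rfl
    rw [inv_zero, mul_zero, ← map_zero ρ] at hρl
    exact Xv_ne_zero l (ρ.injective hρl)
  have hP : P ≠ 0 := hTS ▸ (map_ne_zero T).mpr hS
  refine (hT.comp hρ).ext (hq.comp hT) fun i => ?_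
  rw [RingHom.comp_apply, RingHom.comp_apply, hTG i, map_xpow_of_map_Xv_eq_mul_zpow hP hqx,
    hdual i]
  by_cases hi : i = l
  · subst hi
    rw [hρl, map_mul, map_inv₀, hTS, hTG i, if_pos rfl, zpow_neg_one]
  · rw [hρx i hi, hTG i, if_neg hi, neg_zero, zpow_zero, mul_one]

lemma FixesCoefficients.map_sum_Zc_mul_zpow {G Bp B₀ C : Matrix (Fin n) (Fin n) ℤ}
    (hT : FixesCoefficients T) (hTG : ActsOnXBy T G)
    (hGB : G * Bp = B₀ * C) (l : Fin n) (εl : ℤ) :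
    T (∑ s ∈ range (r l + 1),
        Zc r l s * ((∏ m, Yv m ^ C m l) * ∏ m, Xv m ^ Bp m l) ^ (εl * s)) =
      ∑ s ∈ range (r l + 1), Zc r l s * yhatpow r B₀ (fun m => εl * C m l) ^ s := by
  have hmono : T ((∏ m, Yv m ^ C m l) * xpow r (fun m => Bp m l)) =
      yhatpow r B₀ (fun m => C m l) := by
    have hcol : G *ᵥ (fun m => Bp m l) = B₀ *ᵥ (fun m => C m l) := by
      ext a
      simpa [Matrix.mulVec, dotProduct, Matrix.mul_apply] using congrFun (congrFun hGB a) l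
    rw [map_mul, hTG.map_xpow, hcol, yhatpow_eq, map_prod]
    simp only [map_zpow₀, hT.2.1]
  rw [map_sum]
  refine sum_congr rfl fun s _ => ?_
  rw [map_mul, hT.map_Zc, map_zpow₀,
    show ∏ m, Xv m ^ Bp m l = xpow r (fun m => Bp m l) from rfl, hmono,
    show (fun m => εl * C m l) = εl • fun m => C m l from rfl, yhatpow_smul, ← zpow_natCast,
    ← zpow_mul]

end Intertwining

theorem stmt_9_general (n K : ℕ) (r : Fin n → ℕ) (hr : ∀ i, 0 < r i)
    (B₀ : Matrix (Fin n) (Fin n) ℤ)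
    (D₀ : Fin n → ℤ) (hD₀ : ∀ i, 0 < D₀ i)
    (hskew : ∀ i j, D₀ i * (r i : ℤ) * B₀ i j = -(D₀ j * (r j : ℤ) * B₀ j i))
    (idx : ℕ → Fin n) (ε : ℕ → ℤ)
    (hε : ∀ j < K, ε (j + 1) = 1 ∨ ε (j + 1) = -1)
    (B C G : ℕ → Matrix (Fin n) (Fin n) ℤ)
    (hB0 : B 0 = B₀) (hC0 : C 0 = 1) (hG0 : G 0 = 1)
    -- at each step the c-vector is nonzero and sign-coherent with common sign ε_j
    (hcv : ∀ j < K, (∃ l, C j l (idx (j + 1)) ≠ 0) ∧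
      ∀ l, 0 ≤ ε (j + 1) * C j l (idx (j + 1)))
    (hB : ∀ j < K, ∀ (a b : Fin n),
      B (j + 1) a b =
        if a = idx (j + 1) ∨ b = idx (j + 1) then -(B j a b)
        else B j a b + (r (idx (j + 1)) : ℤ) *
          (max (-(B j a (idx (j + 1)))) 0 * B j (idx (j + 1)) b
            + B j a (idx (j + 1)) * max (B j (idx (j + 1)) b) 0))
    (hC : ∀ j < K, ∀ (a b : Fin n),
      C (j + 1) a b =
        if b = idx (j + 1) then -(C j a b)
        else C j a b + (r (idx (j + 1)) : ℤ) *
          (C j a (idx (j + 1)) * max (ε (j + 1) * B j (idx (j + 1)) b) 0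
            + max (-(ε (j + 1) * C j a (idx (j + 1)))) 0 * B j (idx (j + 1)) b))
    (hG : ∀ j < K, ∀ (l i : Fin n),
      G (j + 1) l i =
        if i = idx (j + 1) then
          -(G j l i) + (r (idx (j + 1)) : ℤ) *
            ∑ p, max (-(ε (j + 1) * B j p (idx (j + 1)))) 0 * G j l p
        else G j l i)
    (τ : ℕ → (GF n r →+* GF n r))
    (hτ0 : ∀ j < K, ∀ a : ℚ, τ (j + 1) (Qc a) = Qc a)
    (hτy : ∀ j < K, ∀ i, τ (j + 1) (Yv i) = Yv i)
    (hτz : ∀ j < K, ∀ i s, τ (j + 1) (Zv i s) = Zv i s)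
    (hτx : ∀ j < K, ∀ i, i ≠ idx (j + 1) → τ (j + 1) (Xv i) = Xv i)
    (hτxk : ∀ j < K, τ (j + 1) (Xv (idx (j + 1))) =
      (Xv (idx (j + 1)) : GF n r)⁻¹ *
        ∏ l, Xv l ^ max (-(ε (j + 1) * B j l (idx (j + 1)) * (r (idx (j + 1)) : ℤ))) 0)
    (T : ℕ → (GF n r →+* GF n r))
    (hT0 : T 0 = RingHom.id _)
    (hT : ∀ j < K, T (j + 1) = (T j).comp (τ (j + 1)))
    -- the fixed step `p` and direction `l`
    (p : ℕ) (hp : p ≤ K) (l : Fin n)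
    (εl : ℤ)
    (h' : Fin n → ℤ)
    (hh' : ∀ i, h' i * (D₀ l * (r l : ℤ)) = D₀ i * (r i : ℤ) * C p i l)
    (hdual : ∀ i, ∑ m, G p m i * (D₀ m * (r m : ℤ)) * C p m l =
      if i = l then D₀ l * (r l : ℤ) else 0)
    (ρ q : GF n r →+* GF n r)
    (hρ0 : ∀ a : ℚ, ρ (Qc a) = Qc a)
    (hρy : ∀ i, ρ (Yv i) = Yv i)
    (hρz : ∀ i s, ρ (Zv i s) = Zv i s)
    (hρx : ∀ i, i ≠ l → ρ (Xv i) = Xv i)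
    (hρl : ρ (Xv l) = Xv l *
      (∑ s ∈ Finset.range (r l + 1),
        Zc r l s *
          ((∏ m, Yv (r := r) m ^ C p m l) * ∏ m, Xv (r := r) m ^ B p m l) ^ (εl * s))⁻¹)
    (hq0 : ∀ a : ℚ, q (Qc a) = Qc a)
    (hqy : ∀ i, q (Yv i) = Yv i)
    (hqz : ∀ i s, q (Zv i s) = Zv i s)
    (hqx : ∀ i, q (Xv i) =
      Xv i * (∑ s ∈ Finset.range (r l + 1),
        Zc r l s * yhatpow r B₀ (fun m => εl * C p m l) ^ s) ^ (-(h' i))) :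
    ∀ f, T p (ρ f) = q (T p f) := by
  have hd : ∀ i, 0 < D₀ i * (r i : ℤ) := fun i => mul_pos (hD₀ i) (by exact_mod_cast hr i)
  have hGmut : ∀ j < K,
      G (j + 1) = mutG (r (idx (j + 1))) (idx (j + 1)) (ε (j + 1)) (B j) (G j) :=
    fun j hj => Matrix.ext (hG j hj)
  have hGB : G p * B p = B₀ * C p := hB0 ▸
    mul_eq_mul_of_mutation_seq hd (hB0 ▸ hskew) (fun j hj => Matrix.ext (hB j hj))
      (fun j hj => Matrix.ext (hC j hj)) hGmut hε (fun j hj => (hcv j hj).2) hC0 hG0 p hp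
  obtain ⟨hTfix, hTG⟩ := fixesCoefficients_actsOnXBy_seq hT0 hG0 hT
    (fun j hj => (hGmut j hj).trans (mutG_eq_mul _ _ _ _ _))
    (fun j hj => ⟨⟨hτ0 j hj, hτy j hj, hτz j hj⟩,
      actsOnXBy_mutG_one (Int.natCast_nonneg _) (hτx j hj) (hτxk j hj)⟩) p hp
  have hcomm :=
    comp_eq_comp_of_dual hTfix hTG ⟨hρ0, hρy, hρz⟩ ⟨hq0, hqy, hqz⟩ hρx hρl hqx
    (hTfix.map_sum_Zc_mul_zpow hTG hGB l εl) (sum_mul_eq_ite_of_dual (hd l).ne' hh' hdual)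
  exact fun f => DFunLike.congr_fun hcomm f

/-- Fix `0 ≤ p ≤ K` and `l ∈ [1,n]`; let `c` be the `l`-th column
of `C_p`, nonzero and sign-coherent with common sign `ε_l`, and assume each
`h'_i = (e_i, d_l·c)_{D₀R}` is an integer and the duality
`(g_{i;p}, d_l·c)_{D₀R} = δ_{il}`. With `ρ` the automorphism sending `x_l` to
`x_l·(∑_s z_{l,s}·Ŷ^{ε_l s})⁻¹` (fixing the other generators), where
`Ŷ = ∏ y_m^{c_{ml;p}}·∏ x_m^{b_{ml;p}}`, and `q` the automorphism sending each `x_i`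
to `x_i·(∑_s z_{l,s}·(ŷ^{c⁺})^s)^{-h'_i}`, one has `τ^{(p)} ∘ ρ = q ∘ τ^{(p)}`. -/
theorem stmt_9 (n K : ℕ) (hn : 1 ≤ n) (r : Fin n → ℕ) (hr : ∀ i, 0 < r i)
    (B₀ : Matrix (Fin n) (Fin n) ℤ)
    (D₀ : Fin n → ℤ) (hD₀ : ∀ i, 0 < D₀ i)
    (hskew : ∀ i j, D₀ i * (r i : ℤ) * B₀ i j = -(D₀ j * (r j : ℤ) * B₀ j i))
    (idx : ℕ → Fin n) (ε : ℕ → ℤ)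
    (hε : ∀ j < K, ε (j + 1) = 1 ∨ ε (j + 1) = -1)
    (B C G : ℕ → Matrix (Fin n) (Fin n) ℤ)
    (hB0 : B 0 = B₀) (hC0 : C 0 = 1) (hG0 : G 0 = 1)
    -- at each step the c-vector is nonzero and sign-coherent with common sign ε_j
    (hcv : ∀ j < K, (∃ l, C j l (idx (j + 1)) ≠ 0) ∧
      ∀ l, 0 ≤ ε (j + 1) * C j l (idx (j + 1)))
    (hB : ∀ j < K, ∀ (a b : Fin n),
      B (j + 1) a b =
        if a = idx (j + 1) ∨ b = idx (j + 1) then -(B j a b)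
        else B j a b + (r (idx (j + 1)) : ℤ) *
          (max (-(B j a (idx (j + 1)))) 0 * B j (idx (j + 1)) b
            + B j a (idx (j + 1)) * max (B j (idx (j + 1)) b) 0))
    (hC : ∀ j < K, ∀ (a b : Fin n),
      C (j + 1) a b =
        if b = idx (j + 1) then -(C j a b)
        else C j a b + (r (idx (j + 1)) : ℤ) *
          (C j a (idx (j + 1)) * max (ε (j + 1) * B j (idx (j + 1)) b) 0
            + max (-(ε (j + 1) * C j a (idx (j + 1)))) 0 * B j (idx (j + 1)) b))
    (hG : ∀ j < K, ∀ (l i : Fin n),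
      G (j + 1) l i =
        if i = idx (j + 1) then
          -(G j l i) + (r (idx (j + 1)) : ℤ) *
            ∑ p, max (-(ε (j + 1) * B j p (idx (j + 1)))) 0 * G j l p
        else G j l i)
    (τ : ℕ → (GF n r →+* GF n r))
    (hτ0 : ∀ j < K, ∀ a : ℚ, τ (j + 1) (Qc a) = Qc a)
    (hτy : ∀ j < K, ∀ i, τ (j + 1) (Yv i) = Yv i)
    (hτz : ∀ j < K, ∀ i s, τ (j + 1) (Zv i s) = Zv i s)
    (hτx : ∀ j < K, ∀ i, i ≠ idx (j + 1) → τ (j + 1) (Xv i) = Xv i)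
    (hτxk : ∀ j < K, τ (j + 1) (Xv (idx (j + 1))) =
      (Xv (idx (j + 1)) : GF n r)⁻¹ *
        ∏ l, Xv l ^ max (-(ε (j + 1) * B j l (idx (j + 1)) * (r (idx (j + 1)) : ℤ))) 0)
    (T : ℕ → (GF n r →+* GF n r))
    (hT0 : T 0 = RingHom.id _)
    (hT : ∀ j < K, T (j + 1) = (T j).comp (τ (j + 1)))
    -- the fixed step `p` and direction `l`
    (p : ℕ) (hp : p ≤ K) (l : Fin n)
    (hcl : ∃ i, C p i l ≠ 0) (εl : ℤ) (hεl : εl = 1 ∨ εl = -1)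
    (hscl : ∀ i, 0 ≤ εl * C p i l)
    (h' : Fin n → ℤ)
    (hh' : ∀ i, h' i * (D₀ l * (r l : ℤ)) = D₀ i * (r i : ℤ) * C p i l)
    (hdual : ∀ i, ∑ m, G p m i * (D₀ m * (r m : ℤ)) * C p m l =
      if i = l then D₀ l * (r l : ℤ) else 0)
    (ρ q : GF n r →+* GF n r)
    (hρ0 : ∀ a : ℚ, ρ (Qc a) = Qc a)
    (hρy : ∀ i, ρ (Yv i) = Yv i)
    (hρz : ∀ i s, ρ (Zv i s) = Zv i s)
    (hρx : ∀ i, i ≠ l → ρ (Xv i) = Xv i)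
    (hρl : ρ (Xv l) = Xv l *
      (∑ s ∈ Finset.range (r l + 1),
        Zc r l s *
          ((∏ m, Yv (r := r) m ^ C p m l) * ∏ m, Xv (r := r) m ^ B p m l) ^ (εl * s))⁻¹)
    (hq0 : ∀ a : ℚ, q (Qc a) = Qc a)
    (hqy : ∀ i, q (Yv i) = Yv i)
    (hqz : ∀ i s, q (Zv i s) = Zv i s)
    (hqx : ∀ i, q (Xv i) =
      Xv i * (∑ s ∈ Finset.range (r l + 1),
        Zc r l s * yhatpow r B₀ (fun m => εl * C p m l) ^ s) ^ (-(h' i))) :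
    ∀ f, T p (ρ f) = q (T p f) :=
  stmt_9_general n K r hr B₀ D₀ hD₀ hskew idx ε hε B C G hB0 hC0 hG0 hcv hB hC hG τ hτ0 hτy hτz hτx
    hτxk T hT0 hT p hp l εl h' hh' hdual ρ q hρ0 hρy hρz hρx hρl hq0 hqy hqz hqx
end
end

section
/- For every 1 ≤ i ≤ n: q^{(K)}(x^{g_{i;K}}) = μ^{(K)}(x_i), where g_{i;K} is the i-th column of G_K. Equivalently, q^{(K)}(x^{g_{i;K}}) = x^{g_{i;K}}·F_{i;t_K}(ŷ, z), where F_{i;t_K} is the F-polynomial of the cluster variable x_{i;t_K} of the generalized cluster algebra with principal coefficients (so that μ^{(K)}(x_i) = x^{g_{i;K}}·F_{i;t_K}(ŷ, z) is the separation formula). -/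
noncomputable section

/-!
Induction on the length of the mutation sequence. The map `q_j` multiplies a monomial `x^v` by
`P_j^{-h_j·v}`, and tropical duality at step `j` gives `h_j·g_{i;j} = -δ_{i,i_j}`, so `q_j` only
changes `x^{g_{i_j;j}}`, into `x^{g_{i_j;j}} P_j`. By the mutation rule for `g`-vectors and the
identity `B₀ C_j = G_j B_j`, this product is the exchange relation evaluated at the monomials
`x^{g_{l;j-1}}`, which `q^{(j-1)}` sends to `μ^{(j-1)}(x_l)` by induction.

The identity `B₀ C_j = G_j B_j` persists because, for sign-coherent `c`-vectors, the three
mutations are `C' = C E`, `G' = G F` and `B' = F B E` with `F² = 1`. This needs `b_{kk} = 0`,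
which holds since `D B' = Eᵀ (D B) E` keeps `D B` skew-symmetric.
-/

open scoped Matrix

namespace GeneralizedCluster

lemma forall_le_induction {K : ℕ} {P : ℕ → Prop} (h0 : P 0) (hs : ∀ j < K, P j → P (j + 1)) :
    ∀ j ≤ K, P j := by
  intro j
  induction j with
  | zero => exact fun _ => h0
  | succ j ih => exact fun hj => hs j hj (ih (Nat.le_of_succ_le hj))

lemma prod_zpow_eq_zpow_sum₀ {G₀ ι : Type*} [CommGroupWithZero G₀] {a : G₀} (ha : a ≠ 0)
    (s : Finset ι) (f : ι → ℤ) : ∏ i ∈ s, a ^ f i = a ^ ∑ i ∈ s, f i := by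
  classical
  induction s using Finset.induction with
  | empty => simp
  | insert i s hi ih => rw [Finset.prod_insert hi, Finset.sum_insert hi, zpow_add₀ ha, ih]

section MatrixMutation

open Matrix

variable {ι : Type*} [Fintype ι] [DecidableEq ι]

lemma updateCol_one_mul_apply {R : Type*} [Semiring R] (k : ι) (f : ι → R) (X : Matrix ι ι R)
    (a b : ι) :
    ((1 : Matrix ι ι R).updateCol k f * X) a b = f a * X k b + if a = k then 0 else X a b := by
  simp [mul_apply, updateCol_apply, one_apply, ite_mul, Finset.sum_ite, Finset.filter_ne',
    Finset.filter_eq']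

lemma mul_updateRow_one_apply {R : Type*} [Semiring R] (k : ι) (w : ι → R) (X : Matrix ι ι R)
    (a b : ι) :
    (X * (1 : Matrix ι ι R).updateRow k w) a b = X a k * w b + if b = k then 0 else X a b := by
  simp [mul_apply, updateRow_apply, one_apply, mul_ite, Finset.sum_ite, Finset.filter_ne',
    Finset.filter_eq']

def bMutation (ρ : ℤ) (k : ι) (B : Matrix ι ι ℤ) : Matrix ι ι ℤ :=
  Matrix.of fun a b =>
    if a = k ∨ b = k then -(B a b)
    else B a b + ρ * (max (-(B a k)) 0 * B k b + B a k * max (B k b) 0)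

def cMutation (ρ ε : ℤ) (k : ι) (B C : Matrix ι ι ℤ) : Matrix ι ι ℤ :=
  Matrix.of fun a b =>
    if b = k then -(C a b)
    else C a b + ρ * (C a k * max (ε * B k b) 0 + max (-(ε * C a k)) 0 * B k b)

def gMutation (ρ ε : ℤ) (k : ι) (B G : Matrix ι ι ℤ) : Matrix ι ι ℤ :=
  Matrix.of fun l i =>
    if i = k then -(G l i) + ρ * ∑ p, max (-(ε * B p k)) 0 * G l p
    else G l i

/-- `J_k + ρ[εB]_+^{k•}` in the notation of Nakanishi–Zelevinsky, provided `B k k = 0`. -/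
def cMutationMatrix (ρ ε : ℤ) (k : ι) (B : Matrix ι ι ℤ) : Matrix ι ι ℤ :=
  (1 : Matrix ι ι ℤ).updateRow k fun b => ρ * max (ε * B k b) 0 - if b = k then 1 else 0

/-- `J_k + ρ[-εB]_+^{•k}`, provided `B k k = 0`. -/
def gMutationMatrix (ρ ε : ℤ) (k : ι) (B : Matrix ι ι ℤ) : Matrix ι ι ℤ :=
  (1 : Matrix ι ι ℤ).updateCol k fun p => ρ * max (-(ε * B p k)) 0 - if p = k then 1 else 0

variable (ρ ε : ℤ) (k : ι) {B : Matrix ι ι ℤ}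

lemma cMutation_eq_mul {C : Matrix ι ι ℤ} (hkk : B k k = 0) (hC : ∀ a, 0 ≤ ε * C a k) :
    cMutation ρ ε k B C = C * cMutationMatrix ρ ε k B := by
  ext a b
  rw [cMutationMatrix, mul_updateRow_one_apply]
  by_cases hb : b = k
  · subst hb; simp [cMutation, hkk]
  · simp only [cMutation, of_apply, hb, if_false, max_eq_right (neg_nonpos.2 (hC a)), zero_mul,
      add_zero, sub_zero]
    ring

lemma gMutation_eq_mul (G : Matrix ι ι ℤ) :
    gMutation ρ ε k B G = G * gMutationMatrix ρ ε k B := by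
  ext l i
  rw [gMutationMatrix, mul_updateCol, mul_one, updateCol_apply]
  by_cases hi : i = k
  · subst hi
    simp only [gMutation, of_apply, mulVec, dotProduct, mul_sub, mul_ite, mul_one,
      mul_zero, Finset.sum_sub_distrib, Finset.sum_ite_eq', Finset.mem_univ, Finset.mul_sum]
    rw [if_pos trivial, neg_add_eq_sub]
    congr 1
    exact Finset.sum_congr rfl fun p _ => by ring
  · simp [gMutation, hi]

lemma gMutationMatrix_mul_self (hkk : B k k = 0) :
    gMutationMatrix ρ ε k B * gMutationMatrix ρ ε k B = 1 := by
  ext a b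
  rw [gMutationMatrix, updateCol_one_mul_apply]
  rcases eq_or_ne b k with rfl | hb
  · rcases eq_or_ne a b with rfl | ha <;> simp [*]
  · rcases eq_or_ne a b with rfl | hab <;> simp [*, hb.symm, one_apply]

lemma max_neg_mul_add_mul_max {ε : ℤ} (hε : ε = 1 ∨ ε = -1) (x y : ℤ) :
    max (-(ε * x)) 0 * y + x * max (ε * y) 0 = max (-x) 0 * y + x * max y 0 := by
  rcases hε with rfl | rfl
  · simp
  · rcases le_total x 0 with hx | hx <;> rcases le_total y 0 with hy | hy <;>
      simp [hx, hy]

lemma bMutation_eq_mul {ε : ℤ} (hε : ε = 1 ∨ ε = -1) (hkk : B k k = 0) :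
    bMutation ρ k B = gMutationMatrix ρ ε k B * B * cMutationMatrix ρ ε k B := by
  ext a b
  rw [cMutationMatrix, mul_updateRow_one_apply, gMutationMatrix, updateCol_one_mul_apply,
    updateCol_one_mul_apply]
  rcases eq_or_ne b k with rfl | hb
  · rcases eq_or_ne a b with rfl | ha <;> simp [*, bMutation]
  · rcases eq_or_ne a k with rfl | ha
    · simp [*, bMutation]
    · simp only [bMutation, of_apply, ha, hb, or_self, if_false, hkk]
      linear_combination (-ρ) * max_neg_mul_add_mul_max hε (B a k) (B k b)

lemma diag_eq_zero_of_skew {d : ι → ℤ} (hskew : (diagonal d * B)ᵀ = -(diagonal d * B)) {a : ι}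
    (ha : d a ≠ 0) : B a a = 0 := by
  have h := congr_fun (congr_fun hskew a) a
  simp only [transpose_apply, neg_apply, diagonal_mul] at h
  exact (mul_eq_zero.1 (by linarith)).resolve_left ha

lemma diagonal_mul_gMutationMatrix {d : ι → ℤ} (hd : ∀ a, 0 ≤ d a)
    (hskew : (diagonal d * B)ᵀ = -(diagonal d * B)) (hkk : B k k = 0) :
    diagonal d * gMutationMatrix ρ ε k B = (cMutationMatrix ρ ε k B)ᵀ * diagonal d := by
  ext a b
  simp only [diagonal_mul, mul_diagonal, transpose_apply, gMutationMatrix, cMutationMatrix,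
    updateCol_apply, updateRow_apply]
  rcases eq_or_ne b k with rfl | hb
  · rcases eq_or_ne a b with rfl | ha
    · simp [hkk]
    · have hab : d b * B b a = -(d a * B a b) := by
        simpa [diagonal_mul] using congr_fun (congr_fun hskew a) b
      have key : d a * max (-(ε * B a b)) 0 = d b * max (ε * B b a) 0 := by
        rw [mul_max_of_nonneg _ _ (hd a), mul_max_of_nonneg _ _ (hd b), mul_zero, mul_zero]
        congr 1
        linear_combination (-ε) * hab
      simp only [if_true, ha, if_false, sub_zero]
      linear_combination ρ * key
  · rcases eq_or_ne a b with rfl | hab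
    · simp [hb]
    · simp [hb, hab, hab.symm, one_apply]

lemma bMutation_skew {ε : ℤ} (hε : ε = 1 ∨ ε = -1) {d : ι → ℤ} (hd : ∀ a, 0 < d a)
    (hskew : (diagonal d * B)ᵀ = -(diagonal d * B)) :
    (diagonal d * bMutation ρ k B)ᵀ = -(diagonal d * bMutation ρ k B) := by
  have hkk := diag_eq_zero_of_skew hskew (hd k).ne'
  rw [bMutation_eq_mul ρ k hε hkk, ← mul_assoc, ← mul_assoc,
    diagonal_mul_gMutationMatrix ρ ε k (fun a => (hd a).le) hskew hkk, mul_assoc _ (diagonal d),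
    transpose_mul, transpose_mul, hskew, transpose_transpose]
  simp only [mul_neg, neg_mul, mul_assoc]

lemma mul_cMutation {B₀ C G : Matrix ι ι ℤ} {ε : ℤ} (hε : ε = 1 ∨ ε = -1) (hkk : B k k = 0)
    (hC : ∀ a, 0 ≤ ε * C a k) (h : B₀ * C = G * B) :
    B₀ * cMutation ρ ε k B C = gMutation ρ ε k B G * bMutation ρ k B := by
  rw [cMutation_eq_mul ρ ε k hkk hC, gMutation_eq_mul, bMutation_eq_mul ρ k hε hkk, ← mul_assoc, h]
  simp only [← mul_assoc]
  rw [mul_assoc G (gMutationMatrix ρ ε k B), gMutationMatrix_mul_self ρ ε k hkk, mul_one]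

lemma dotProduct_col_of_duality {d h : ι → ℤ} {C C' G' : Matrix ι ι ℤ} {k : ι} (hdk : d k ≠ 0)
    (hh : ∀ m, h m * d k = d m * C m k) (hC' : ∀ m, C' m k = -C m k)
    (hdual : ∀ i l, ∑ m, G' m i * d m * C' m l = if i = l then d l else 0) (i : ι) :
    h ⬝ᵥ (fun m => G' m i) = -(if i = k then 1 else 0) := by
  refine mul_right_cancel₀ hdk ?_
  have hterm : ∀ m, h m * G' m i * d k = -(G' m i * d m * C' m k) := fun m => by
    rw [hC']; linear_combination G' m i * hh m
  rw [dotProduct, Finset.sum_mul, Finset.sum_congr rfl fun m _ => hterm m, Finset.sum_neg_distrib,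
    hdual]
  split_ifs <;> ring

end MatrixMutation

section

variable {n : ℕ} {r : Fin n → ℕ}

lemma Xv_ne_zero (i : Fin n) : (Xv i : GF n r) ≠ 0 :=
  (map_ne_zero_iff _ (IsFractionRing.injective _ _)).2 (MvPolynomial.X_ne_zero _)

lemma xpow_add (v w : Fin n → ℤ) : xpow r (v + w) = xpow r v * xpow r w := by
  simp only [xpow, Pi.add_apply, zpow_add₀ (Xv_ne_zero _), Finset.prod_mul_distrib]

lemma xpow_neg (v : Fin n → ℤ) : xpow r (-v) = (xpow r v)⁻¹ := by
  simp only [xpow, Pi.neg_apply, zpow_neg, Finset.prod_inv_distrib]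

lemma xpow_zpow (v : Fin n → ℤ) (c : ℤ) : xpow r v ^ c = xpow r (c • v) := by
  simp only [xpow, ← Finset.prod_zpow, ← zpow_mul, Pi.smul_apply, smul_eq_mul, mul_comm]

lemma xpow_single (i : Fin n) : xpow r (fun l => (1 : Matrix (Fin n) (Fin n) ℤ) l i) = Xv i := by
  rw [xpow, Finset.prod_eq_single i (fun l _ hl => by rw [Matrix.one_apply_ne hl, zpow_zero])
    (fun h => absurd (Finset.mem_univ i) h), Matrix.one_apply_eq, zpow_one]

lemma prod_xpow_zpow (G : Matrix (Fin n) (Fin n) ℤ) (e : Fin n → ℤ) :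
    ∏ l, xpow r (fun m => G m l) ^ e l = xpow r (G *ᵥ e) := by
  simp only [xpow, ← Finset.prod_zpow, ← zpow_mul]
  rw [Finset.prod_comm]
  simp only [prod_zpow_eq_zpow_sum₀ (Xv_ne_zero _), Matrix.mulVec, dotProduct]

lemma yhatpow_eq (B : Matrix (Fin n) (Fin n) ℤ) (v : Fin n → ℤ) :
    yhatpow r B v = (∏ i, Yv i ^ v i) * xpow r (B *ᵥ v) := by
  rw [yhatpow, ← prod_xpow_zpow, ← Finset.prod_mul_distrib]
  exact Finset.prod_congr rfl fun i _ => by rw [yhat, mul_zpow, xpow]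

lemma map_xpow {φ : GF n r →+* GF n r} {P : GF n r} (hP : P ≠ 0) {h : Fin n → ℤ}
    (hφ : ∀ i, φ (Xv i) = Xv i * P ^ (-h i)) (v : Fin n → ℤ) :
    φ (xpow r v) = xpow r v * P ^ (-(h ⬝ᵥ v)) := by
  simp only [xpow, map_prod, map_zpow₀, hφ, mul_zpow, ← zpow_mul, Finset.prod_mul_distrib,
    prod_zpow_eq_zpow_sum₀ hP, dotProduct, ← Finset.sum_neg_distrib, neg_mul]

def FixesCoeffs (φ : GF n r →+* GF n r) : Prop :=
  (∀ i, φ (Yv i) = Yv i) ∧ ∀ i s, φ (Zv i s) = Zv i s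

lemma FixesCoeffs.id : FixesCoeffs (RingHom.id (GF n r)) :=
  ⟨fun _ => rfl, fun _ _ => rfl⟩

lemma FixesCoeffs.comp {φ ψ : GF n r →+* GF n r} (hφ : FixesCoeffs φ) (hψ : FixesCoeffs ψ) :
    FixesCoeffs (φ.comp ψ) :=
  ⟨fun i => by rw [RingHom.comp_apply, hψ.1, hφ.1], fun i s => by rw [RingHom.comp_apply, hψ.2, hφ.2]⟩

lemma FixesCoeffs.map_Zc {φ : GF n r →+* GF n r} (hφ : FixesCoeffs φ) (i : Fin n) (s : ℕ) :
    φ (Zc r i s) = Zc r i s := by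
  unfold Zc
  split_ifs
  · exact hφ.2 _ _
  · exact map_one φ

/-- The right-hand side of the exchange relation for the mutation at `k`, evaluated at the
cluster `u`; `b` and `c` are the `k`-th columns of the current `B`- and `C`-matrices. -/
def exchange (r : Fin n → ℕ) (k : Fin n) (ε : ℤ) (b c : Fin n → ℤ) (u : Fin n → GF n r) :
    GF n r :=
  (u k)⁻¹ * (∏ l, u l ^ max (-(ε * b l)) 0) ^ r k *
    ∑ s ∈ Finset.range (r k + 1),
      Zc r k s * ((∏ l, Yv l ^ c l) * ∏ l, u l ^ b l) ^ (ε * s)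

lemma FixesCoeffs.map_exchange {φ : GF n r →+* GF n r} (hφ : FixesCoeffs φ) (k : Fin n) (ε : ℤ)
    (b c : Fin n → ℤ) (u : Fin n → GF n r) :
    φ (exchange r k ε b c u) = exchange r k ε b c (φ ∘ u) := by
  simp only [exchange, map_mul, map_inv₀, map_pow, map_sum, map_prod, map_zpow₀, hφ.1,
    hφ.map_Zc, Function.comp_apply]

lemma xpow_gMutation_mul_eq_exchange {B₀ B C G : Matrix (Fin n) (Fin n) ℤ} (k : Fin n) (ε : ℤ)
    (hBCG : B₀ * C = G * B) :
    xpow r (fun m => gMutation (r k) ε k B G m k) *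
        ∑ s ∈ Finset.range (r k + 1), Zc r k s * yhatpow r B₀ (fun m => ε * C m k) ^ s =
      exchange r k ε (fun l => B l k) (fun l => C l k) (fun l => xpow r fun m => G m l) := by
  have hg : xpow r (fun m => gMutation (r k) ε k B G m k) =
      (xpow r fun m => G m k)⁻¹ * (∏ l, xpow r (fun m => G m l) ^ max (-(ε * B l k)) 0) ^ r k := by
    rw [prod_xpow_zpow, ← zpow_natCast, xpow_zpow, ← xpow_neg, ← xpow_add]
    congr 1
    ext m
    simp [gMutation, Matrix.mulVec, dotProduct, mul_comm]
  have hcol : B₀ *ᵥ (fun m => C m k) = G *ᵥ fun l => B l k :=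
    funext fun a => congr_fun (congr_fun hBCG a) k
  have hy : yhatpow r B₀ (fun m => ε * C m k) =
      ((∏ l, Yv l ^ C l k) * ∏ l, xpow r (fun m => G m l) ^ B l k) ^ ε := by
    rw [yhatpow_eq, prod_xpow_zpow, mul_zpow, xpow_zpow, ← Finset.prod_zpow, ← hcol,
      ← Matrix.mulVec_smul]
    congr 1
    exact Finset.prod_congr rfl fun l _ => by rw [← zpow_mul, mul_comm]
  rw [exchange, hg]
  congr 1
  refine Finset.sum_congr rfl fun s _ => ?_
  rw [hy, ← zpow_natCast, ← zpow_mul]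

lemma separation_step {φ ψ q μ : GF n r →+* GF n r} (hφ : FixesCoeffs φ) (hψ : FixesCoeffs ψ)
    {B₀ B C G : Matrix (Fin n) (Fin n) ℤ} {k : Fin n} {ε : ℤ} {h : Fin n → ℤ}
    (hBCG : B₀ * C = G * B)
    (hexp : ∀ i, h ⬝ᵥ (fun m => gMutation (r k) ε k B G m i) = -(if i = k then 1 else 0))
    (hq : ∀ i, q (Xv i) = Xv i * (∑ s ∈ Finset.range (r k + 1),
      Zc r k s * yhatpow r B₀ (fun m => ε * C m k) ^ s) ^ (-h i))
    (hμ : ∀ i, i ≠ k → μ (Xv i) = Xv i)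
    (hμk : μ (Xv k) = exchange r k ε (fun l => B l k) (fun l => C l k) Xv)
    (ih : ∀ l, φ (xpow r fun m => G m l) = ψ (Xv l)) (i : Fin n) :
    φ (q (xpow r fun m => gMutation (r k) ε k B G m i)) = ψ (μ (Xv i)) := by
  set P := ∑ s ∈ Finset.range (r k + 1), Zc r k s * yhatpow r B₀ (fun m => ε * C m k) ^ s
  have hP : P ≠ 0 := by
    obtain ⟨l, hl⟩ : ∃ l, h l ≠ 0 := by
      by_contra! h0
      simpa [dotProduct, h0] using hexp k
    intro hP0
    refine Xv_ne_zero (r := r) l (q.injective ?_)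
    rw [hq l, hP0, zero_zpow _ (neg_ne_zero.2 hl), mul_zero, map_zero]
  rw [map_xpow hP hq, hexp]
  rcases eq_or_ne i k with rfl | hik
  · rw [if_pos rfl, neg_neg, zpow_one, xpow_gMutation_mul_eq_exchange _ _ hBCG, hφ.map_exchange, hμk,
      hψ.map_exchange]
    exact congr_arg _ (funext ih)
  · simp only [if_neg hik, neg_zero, zpow_zero, mul_one]
    rw [hμ i hik, ← ih i]
    congr 2
    ext m
    simp [gMutation, hik]

end

end GeneralizedCluster

open GeneralizedCluster in
theorem stmt_11_general (n K : ℕ) (r : Fin n → ℕ) (hr : ∀ i, 0 < r i)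
    (B₀ : Matrix (Fin n) (Fin n) ℤ)
    (D₀ : Fin n → ℤ) (hD₀ : ∀ i, 0 < D₀ i)
    (hskew : ∀ i j, D₀ i * (r i : ℤ) * B₀ i j = -(D₀ j * (r j : ℤ) * B₀ j i))
    (idx : ℕ → Fin n) (ε : ℕ → ℤ)
    (hε : ∀ j < K, ε (j + 1) = 1 ∨ ε (j + 1) = -1)
    (B C G : ℕ → Matrix (Fin n) (Fin n) ℤ)
    (hB0 : B 0 = B₀) (hC0 : C 0 = 1) (hG0 : G 0 = 1)
    -- at each step the c-vector is nonzero and sign-coherent with common sign ε_j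
    (hcv : ∀ j < K, (∃ l, C j l (idx (j + 1)) ≠ 0) ∧
      ∀ l, 0 ≤ ε (j + 1) * C j l (idx (j + 1)))
    (hB : ∀ j < K, ∀ (a b : Fin n),
      B (j + 1) a b =
        if a = idx (j + 1) ∨ b = idx (j + 1) then -(B j a b)
        else B j a b + (r (idx (j + 1)) : ℤ) *
          (max (-(B j a (idx (j + 1)))) 0 * B j (idx (j + 1)) b
            + B j a (idx (j + 1)) * max (B j (idx (j + 1)) b) 0))
    (hC : ∀ j < K, ∀ (a b : Fin n),
      C (j + 1) a b =
        if b = idx (j + 1) then -(C j a b)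
        else C j a b + (r (idx (j + 1)) : ℤ) *
          (C j a (idx (j + 1)) * max (ε (j + 1) * B j (idx (j + 1)) b) 0
            + max (-(ε (j + 1) * C j a (idx (j + 1)))) 0 * B j (idx (j + 1)) b))
    (hG : ∀ j < K, ∀ (l i : Fin n),
      G (j + 1) l i =
        if i = idx (j + 1) then
          -(G j l i) + (r (idx (j + 1)) : ℤ) *
            ∑ p, max (-(ε (j + 1) * B j p (idx (j + 1)))) 0 * G j l p
        else G j l i)
    -- tropical duality
    (hdual : ∀ j ≤ K, ∀ (i l : Fin n),
      ∑ m, G j m i * (D₀ m * (r m : ℤ)) * C j m l =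
        if i = l then D₀ l * (r l : ℤ) else 0)
    -- the rational numbers h_{i,j} = (e_i, d_{(j)}·c_j)_{D₀R} are integers
    (hfun : ℕ → Fin n → ℤ)
    (hfunint : ∀ j < K, ∀ i,
      hfun (j + 1) i * (D₀ (idx (j + 1)) * (r (idx (j + 1)) : ℤ)) =
        D₀ i * (r i : ℤ) * C j i (idx (j + 1)))
    (μ : ℕ → (GF n r →+* GF n r))
    (hμy : ∀ j < K, ∀ i, μ (j + 1) (Yv i) = Yv i)
    (hμz : ∀ j < K, ∀ i s, μ (j + 1) (Zv i s) = Zv i s)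
    (hμx : ∀ j < K, ∀ i, i ≠ idx (j + 1) → μ (j + 1) (Xv i) = Xv i)
    (hμxk : ∀ j < K, μ (j + 1) (Xv (idx (j + 1))) =
      (Xv (idx (j + 1)) : GF n r)⁻¹ *
        (∏ l, Xv (r := r) l ^ max (-(ε (j + 1) * B j l (idx (j + 1)))) 0) ^ (r (idx (j + 1))) *
        ∑ s ∈ Finset.range (r (idx (j + 1)) + 1),
          Zc r (idx (j + 1)) s *
            ((∏ l, Yv (r := r) l ^ C j l (idx (j + 1))) *
              ∏ l, Xv (r := r) l ^ B j l (idx (j + 1))) ^ (ε (j + 1) * s))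
    (M : ℕ → (GF n r →+* GF n r))
    (hM0 : M 0 = RingHom.id _)
    (hM : ∀ j < K, M (j + 1) = (M j).comp (μ (j + 1)))
    (q : ℕ → (GF n r →+* GF n r))
    (hqy : ∀ j < K, ∀ i, q (j + 1) (Yv i) = Yv i)
    (hqz : ∀ j < K, ∀ i s, q (j + 1) (Zv i s) = Zv i s)
    (hqx : ∀ j < K, ∀ i, q (j + 1) (Xv i) =
      Xv i * (∑ s ∈ Finset.range (r (idx (j + 1)) + 1),
        Zc r (idx (j + 1)) s *
          yhatpow r B₀ (fun m => ε (j + 1) * C j m (idx (j + 1))) ^ s) ^ (-(hfun (j + 1) i)))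
    (Q : ℕ → (GF n r →+* GF n r))
    (hQ0 : Q 0 = RingHom.id _)
    (hQ : ∀ j < K, Q (j + 1) = (Q j).comp (q (j + 1)))
    : ∀ i, Q K (xpow r (fun l => G K l i)) = M K (Xv i) := by
  have hd : ∀ m, 0 < D₀ m * (r m : ℤ) := fun m => mul_pos (hD₀ m) (by exact_mod_cast hr m)
  have hB' : ∀ j < K, B (j + 1) = bMutation (r (idx (j + 1))) (idx (j + 1)) (B j) :=
    fun j hj => Matrix.ext (hB j hj)
  have hC' : ∀ j < K,
      C (j + 1) = cMutation (r (idx (j + 1))) (ε (j + 1)) (idx (j + 1)) (B j) (C j) :=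
    fun j hj => Matrix.ext (hC j hj)
  have hG' : ∀ j < K,
      G (j + 1) = gMutation (r (idx (j + 1))) (ε (j + 1)) (idx (j + 1)) (B j) (G j) :=
    fun j hj => Matrix.ext (hG j hj)
  have hskewB : ∀ j ≤ K, (Matrix.diagonal (fun m => D₀ m * (r m : ℤ)) * B j)ᵀ =
      -(Matrix.diagonal (fun m => D₀ m * (r m : ℤ)) * B j) :=
    forall_le_induction (by ext a b; simp [hB0, Matrix.diagonal_mul, hskew b a])
      fun j hj ih => hB' j hj ▸ bMutation_skew _ _ (hε j hj) hd ih
  have hBCG : ∀ j ≤ K, B₀ * C j = G j * B j :=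
    forall_le_induction (by rw [hB0, hC0, hG0, mul_one, one_mul]) fun j hj ih => by
      rw [hB' j hj, hC' j hj, hG' j hj]
      exact mul_cMutation _ _ (hε j hj) (diag_eq_zero_of_skew (hskewB j hj.le) (hd _).ne')
        (hcv j hj).2 ih
  have hMfix : ∀ j ≤ K, FixesCoeffs (M j) :=
    forall_le_induction (hM0 ▸ FixesCoeffs.id) fun j hj ih =>
      hM j hj ▸ ih.comp ⟨hμy j hj, hμz j hj⟩
  have hQfix : ∀ j ≤ K, FixesCoeffs (Q j) :=
    forall_le_induction (hQ0 ▸ FixesCoeffs.id) fun j hj ih =>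
      hQ j hj ▸ ih.comp ⟨hqy j hj, hqz j hj⟩
  refine forall_le_induction (P := fun j => ∀ i, Q j (xpow r fun l => G j l i) = M j (Xv i))
    (fun i => by rw [hQ0, hM0, hG0]; exact xpow_single i) (fun j hj ih i => ?_) K le_rfl
  have hexp := dotProduct_col_of_duality (d := fun m => D₀ m * (r m : ℤ)) (C := C j)
    (C' := C (j + 1)) (G' := G (j + 1)) (hd (idx (j + 1))).ne' (hfunint j hj)
    (fun m => by rw [hC' j hj]; simp [cMutation]) (hdual (j + 1) hj)
  rw [hQ j hj, hM j hj, RingHom.comp_apply, RingHom.comp_apply, hG' j hj]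
  rw [hG' j hj] at hexp
  exact separation_step (hQfix j hj.le) (hMfix j hj.le) (hBCG j hj.le) hexp (hqx j hj)
    (hμx j hj) (hμxk j hj) ih i

/-- **separation formula.** For every `1 ≤ i ≤ n`,
`q^{(K)}(x^{g_{i;K}}) = μ^{(K)}(x_i)`; equivalently, with the `F`-polynomial
`F_{i;t_K}(ŷ,z) = x^{-g_{i;K}}·μ^{(K)}(x_i)`, one has
`μ^{(K)}(x_i) = x^{g_{i;K}}·F_{i;t_K}(ŷ,z)`. -/
theorem stmt_11 (n K : ℕ) (hn : 1 ≤ n) (r : Fin n → ℕ) (hr : ∀ i, 0 < r i)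
    (B₀ : Matrix (Fin n) (Fin n) ℤ)
    (D₀ : Fin n → ℤ) (hD₀ : ∀ i, 0 < D₀ i)
    (hskew : ∀ i j, D₀ i * (r i : ℤ) * B₀ i j = -(D₀ j * (r j : ℤ) * B₀ j i))
    (idx : ℕ → Fin n) (ε : ℕ → ℤ)
    (hε : ∀ j < K, ε (j + 1) = 1 ∨ ε (j + 1) = -1)
    (B C G : ℕ → Matrix (Fin n) (Fin n) ℤ)
    (hB0 : B 0 = B₀) (hC0 : C 0 = 1) (hG0 : G 0 = 1)
    -- at each step the c-vector is nonzero and sign-coherent with common sign ε_j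
    (hcv : ∀ j < K, (∃ l, C j l (idx (j + 1)) ≠ 0) ∧
      ∀ l, 0 ≤ ε (j + 1) * C j l (idx (j + 1)))
    (hB : ∀ j < K, ∀ (a b : Fin n),
      B (j + 1) a b =
        if a = idx (j + 1) ∨ b = idx (j + 1) then -(B j a b)
        else B j a b + (r (idx (j + 1)) : ℤ) *
          (max (-(B j a (idx (j + 1)))) 0 * B j (idx (j + 1)) b
            + B j a (idx (j + 1)) * max (B j (idx (j + 1)) b) 0))
    (hC : ∀ j < K, ∀ (a b : Fin n),
      C (j + 1) a b =
        if b = idx (j + 1) then -(C j a b)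
        else C j a b + (r (idx (j + 1)) : ℤ) *
          (C j a (idx (j + 1)) * max (ε (j + 1) * B j (idx (j + 1)) b) 0
            + max (-(ε (j + 1) * C j a (idx (j + 1)))) 0 * B j (idx (j + 1)) b))
    (hG : ∀ j < K, ∀ (l i : Fin n),
      G (j + 1) l i =
        if i = idx (j + 1) then
          -(G j l i) + (r (idx (j + 1)) : ℤ) *
            ∑ p, max (-(ε (j + 1) * B j p (idx (j + 1)))) 0 * G j l p
        else G j l i)
    -- tropical duality
    (hdual : ∀ j ≤ K, ∀ (i l : Fin n),
      ∑ m, G j m i * (D₀ m * (r m : ℤ)) * C j m l =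
        if i = l then D₀ l * (r l : ℤ) else 0)
    -- the rational numbers h_{i,j} = (e_i, d_{(j)}·c_j)_{D₀R} are integers
    (hfun : ℕ → Fin n → ℤ)
    (hfunint : ∀ j < K, ∀ i,
      hfun (j + 1) i * (D₀ (idx (j + 1)) * (r (idx (j + 1)) : ℤ)) =
        D₀ i * (r i : ℤ) * C j i (idx (j + 1)))
    (μ : ℕ → (GF n r →+* GF n r))
    (hμ0 : ∀ j < K, ∀ a : ℚ, μ (j + 1) (Qc a) = Qc a)
    (hμy : ∀ j < K, ∀ i, μ (j + 1) (Yv i) = Yv i)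
    (hμz : ∀ j < K, ∀ i s, μ (j + 1) (Zv i s) = Zv i s)
    (hμx : ∀ j < K, ∀ i, i ≠ idx (j + 1) → μ (j + 1) (Xv i) = Xv i)
    (hμxk : ∀ j < K, μ (j + 1) (Xv (idx (j + 1))) =
      (Xv (idx (j + 1)) : GF n r)⁻¹ *
        (∏ l, Xv (r := r) l ^ max (-(ε (j + 1) * B j l (idx (j + 1)))) 0) ^ (r (idx (j + 1))) *
        ∑ s ∈ Finset.range (r (idx (j + 1)) + 1),
          Zc r (idx (j + 1)) s *
            ((∏ l, Yv (r := r) l ^ C j l (idx (j + 1))) *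
              ∏ l, Xv (r := r) l ^ B j l (idx (j + 1))) ^ (ε (j + 1) * s))
    (M : ℕ → (GF n r →+* GF n r))
    (hM0 : M 0 = RingHom.id _)
    (hM : ∀ j < K, M (j + 1) = (M j).comp (μ (j + 1)))
    (q : ℕ → (GF n r →+* GF n r))
    (hq0 : ∀ j < K, ∀ a : ℚ, q (j + 1) (Qc a) = Qc a)
    (hqy : ∀ j < K, ∀ i, q (j + 1) (Yv i) = Yv i)
    (hqz : ∀ j < K, ∀ i s, q (j + 1) (Zv i s) = Zv i s)
    (hqx : ∀ j < K, ∀ i, q (j + 1) (Xv i) =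
      Xv i * (∑ s ∈ Finset.range (r (idx (j + 1)) + 1),
        Zc r (idx (j + 1)) s *
          yhatpow r B₀ (fun m => ε (j + 1) * C j m (idx (j + 1))) ^ s) ^ (-(hfun (j + 1) i)))
    (Q : ℕ → (GF n r →+* GF n r))
    (hQ0 : Q 0 = RingHom.id _)
    (hQ : ∀ j < K, Q (j + 1) = (Q j).comp (q (j + 1)))
    : ∀ i, Q K (xpow r (fun l => G K l i)) = M K (Xv i) :=
  stmt_11_general n K r hr B₀ D₀ hD₀ hskew idx ε hε B C G hB0 hC0 hG0 hcv hB hC hG hdual hfun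
    hfunint μ hμy hμz hμx hμxk M hM0 hM q hqy hqz hqx Q hQ0 hQ
end
end
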